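/- arXiv:1403.1069 — 2 statements merged into one kernel-verified Lean document; each statement's English description precedes it below -/
import Mathlib

section
/- Let α : ℤ/nℤ → ℝ with ∑_k α_k = n-1, and c_k = ∑_l ω^{-kl} α_l. If |c_k| = 1 for all k ≠ 0, then for all i ≠ j (mod n): ∑_{k=0}^{n-1} α_{i-k} α_{j-k} = n-2. -/
/-!
The autocorrelation `A d = ∑ₘ α (m + d) α m` has discrete Fourier transform `|c_k|²`
(Wiener–Khinchin), so Fourier inversion gives `n · A d = ∑ₖ ω^{kd} |c_k|²`. When `|c_k| = 1` for
`k ≠ 0`, orthogonality of characters (`∑ₖ ω^{kd} = 0` for `d ≠ 0`) leaves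
`n · A d = |c_0|² - 1 = (n - 1)² - 1 = n (n - 2)`.
-/

open Finset ComplexConjugate

namespace ZMod

variable {N : ℕ} [NeZero N]

lemma exp_two_pi_I_div_pow_val (j : ZMod N) :
    Complex.exp (2 * Real.pi * Complex.I / N) ^ j.val = stdAddChar j := by
  rw [stdAddChar_apply, toCircle_apply, ← Complex.exp_nat_mul]
  ring_nf

lemma sum_stdAddChar_mul_eq_zero {d : ZMod N} (hd : d ≠ 0) :
    ∑ k : ZMod N, stdAddChar (k * d) = 0 := by
  rw [AddChar.sum_mulShift d (isPrimitive_stdAddChar N), if_neg hd, Nat.cast_zero]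

def autocorr (Φ : ZMod N → ℂ) (d : ZMod N) : ℂ :=
  ∑ m, Φ (m + d) * conj (Φ m)

lemma dft_autocorr (Φ : ZMod N → ℂ) (k : ZMod N) :
    𝓕 (autocorr Φ) k = (‖𝓕 Φ k‖ : ℂ) ^ 2 := by
  rw [← Complex.mul_conj', dft_apply, dft_apply, map_sum, sum_mul_sum]
  simp only [autocorr, smul_eq_mul, mul_sum, map_mul, ← AddChar.map_neg_eq_conj]
  rw [sum_comm]
  conv_rhs => rw [sum_comm]
  refine sum_congr rfl fun m _ ↦ Fintype.sum_equiv (Equiv.addLeft m) _ _ fun d ↦ ?_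
  rw [Equiv.coe_addLeft, show -(d * k) = -((m + d) * k) + - -(m * k) by ring,
    AddChar.map_add_eq_mul]
  ring

lemma autocorr_eq_sum (Φ : ZMod N → ℂ) (d : ZMod N) :
    autocorr Φ d = (N : ℂ)⁻¹ * ∑ k, stdAddChar (k * d) * (‖𝓕 Φ k‖ : ℂ) ^ 2 := by
  rw [← (𝓕 : (ZMod N → ℂ) ≃ₗ[ℂ] _).symm_apply_apply (autocorr Φ), invDFT_apply]
  simp [dft_autocorr]

lemma autocorr_eq_of_norm_dft_eq_one {Φ : ZMod N → ℂ} (hΦ : ∀ k ≠ 0, ‖𝓕 Φ k‖ = 1)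
    {d : ZMod N} (hd : d ≠ 0) :
    autocorr Φ d = ((‖𝓕 Φ 0‖ : ℂ) ^ 2 - 1) / N := by
  have hflat : ∑ k, stdAddChar (k * d) * ((‖𝓕 Φ k‖ : ℂ) ^ 2 - 1) = (‖𝓕 Φ 0‖ : ℂ) ^ 2 - 1 := by
    rw [sum_eq_single 0 (fun k _ hk ↦ by rw [hΦ k hk, Complex.ofReal_one]; ring) (by simp)]
    simp
  have hsplit : ∑ k, stdAddChar (k * d) * (‖𝓕 Φ k‖ : ℂ) ^ 2
      = ∑ k, stdAddChar (k * d) * ((‖𝓕 Φ k‖ : ℂ) ^ 2 - 1) + ∑ k, stdAddChar (k * d) := by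
    rw [← sum_add_distrib]
    exact sum_congr rfl fun k _ ↦ by ring
  rw [autocorr_eq_sum, hsplit, hflat, sum_stdAddChar_mul_eq_zero hd, add_zero, inv_mul_eq_div]

end ZMod

open ZMod

theorem stmt_3_general (n : ℕ) [NeZero n] (α : ZMod n → ℝ) (c : ZMod n → ℂ)
    (hc : ∀ k : ZMod n,
      c k = ∑ l : ZMod n,
        Complex.exp (2 * Real.pi * Complex.I / n) ^ (-(k * l)).val * (α l : ℂ))
    (hsum : ∑ k : ZMod n, α k = n - 1)
    (habs : ∀ k : ZMod n, k ≠ 0 → ‖c k‖ = 1) :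
    ∀ i j : ZMod n, i ≠ j → ∑ k : ZMod n, α (i - k) * α (j - k) = n - 2 := by
  intro i j hij
  have hc_dft : c = 𝓕 (fun l ↦ (α l : ℂ)) := by
    ext k
    simp only [hc, dft_apply, exp_two_pi_I_div_pow_val, smul_eq_mul, mul_comm k]
  have hc₀ : (‖𝓕 (fun l ↦ (α l : ℂ)) 0‖ : ℂ) ^ 2 = ((n : ℂ) - 1) ^ 2 := by
    rw [dft_apply_zero, ← Complex.ofReal_sum, hsum, Complex.norm_real, Real.norm_eq_abs,
      ← Complex.ofReal_pow, sq_abs]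
    push_cast
    ring
  have hreindex : ∑ k, α (i - k) * α (j - k) = ∑ m, α (m + (i - j)) * α m :=
    Fintype.sum_equiv (Equiv.subLeft j) _ _ fun k ↦ by simp
  have key := autocorr_eq_of_norm_dft_eq_one (hc_dft ▸ habs) (sub_ne_zero.mpr hij)
  simp only [hc₀, autocorr, Complex.conj_ofReal, ← Complex.ofReal_mul, ← Complex.ofReal_sum]
    at key
  rw [hreindex]
  apply Complex.ofReal_injective
  rw [key]
  field_simp [NeZero.ne n]
  push_cast
  ring

theorem stmt_3 (n : ℕ) [NeZero n] (hn : 2 ≤ n) (α : ZMod n → ℝ) (c : ZMod n → ℂ)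
    (hc : ∀ k : ZMod n,
      c k = ∑ l : ZMod n,
        Complex.exp (2 * Real.pi * Complex.I / n) ^ (-(k * l)).val * (α l : ℂ))
    (hsum : ∑ k : ZMod n, α k = n - 1)
    (habs : ∀ k : ZMod n, k ≠ 0 → ‖c k‖ = 1) :
    ∀ i j : ZMod n, i ≠ j → ∑ k : ZMod n, α (i - k) * α (j - k) = n - 2 :=
  stmt_3_general n α c hc hsum habs
end

section
/- Let α : ℤ/nℤ → ℝ with α_k ≥ 0, ∑_k α_k = n-1, and suppose the DFT values c_j = ∑_k ω^{-jk} α_k satisfy |c_j| = 1 for j ≠ 0 and α_k = α_{n-k} for all k. Then c_j ∈ {-1, 1} for all j ≠ 0, and hence the circulant matrix Q with symbol q_0 = α_0, q_k = α_k - 1 (k ≠ 0) is positive semidefinite with eigenvalues λ_0 = 0 and λ_j = c_j + 1 ∈ {0, 2} for j ≠ 0. -/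
/-!
The characters `l ↦ ω^{jl}` diagonalise every circulant matrix, the eigenvalue at `j` being the
discrete Fourier transform of its symbol, and `circulant q = n⁻¹ ∑ⱼ (𝓕 q j) χⱼ χⱼ*`; so a
circulant matrix whose symbol has nonnegative Fourier transform is positive semidefinite.
Since `α` is real and even, `c = 𝓕 α` is real, and `|c j| = 1` forces `c j = ±1`. The symbol of
`Q` is `α - 1 + δ₀`, whose transform is `c j + 1` for `j ≠ 0` and `(n - 1) + 1 - n = 0` at `j = 0`.
-/

open Matrix ComplexOrder

open ZMod Complex ComplexConjugate

namespace ZMod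

variable {N : ℕ} [NeZero N]

lemma exp_pow_val_eq_stdAddChar (j : ZMod N) :
    exp (2 * Real.pi * I / N) ^ j.val = stdAddChar j := by
  rw [stdAddChar_apply, toCircle_apply, ← Complex.exp_nat_mul]
  ring_nf

lemma circulant_mulVec_stdAddChar (q : ZMod N → ℂ) (j : ZMod N) :
    circulant q *ᵥ (fun l ↦ stdAddChar (j * l)) = 𝓕 q j • fun l ↦ stdAddChar (j * l) := by
  ext i
  simp only [mulVec, dotProduct, circulant_apply, Pi.smul_apply, smul_eq_mul, dft_apply,
    Finset.sum_mul]
  refine Fintype.sum_equiv (Equiv.subLeft i) _ _ fun l ↦ ?_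
  rw [Equiv.subLeft_apply, mul_comm (stdAddChar _) (q _), mul_assoc, ← AddChar.map_add_eq_mul]
  congr 2
  ring

lemma circulant_eq_sum_vecMulVec (q : ZMod N → ℂ) :
    circulant q = ∑ j, ((N : ℂ)⁻¹ * 𝓕 q j) •
      vecMulVec (fun l ↦ stdAddChar (j * l)) (star fun l ↦ stdAddChar (j * l)) := by
  ext i l
  have hinversion := congrFun ((𝓕 : (ZMod N → ℂ) ≃ₗ[ℂ] _).symm_apply_apply q) (i - l)
  rw [invDFT_apply, Finset.smul_sum] at hinversion
  rw [circulant_apply, ← hinversion, Matrix.sum_apply]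
  refine Finset.sum_congr rfl fun j _ ↦ ?_
  rw [Matrix.smul_apply, vecMulVec_apply, Pi.star_apply, RCLike.star_def,
    ← AddChar.map_neg_eq_conj, ← AddChar.map_add_eq_mul, smul_eq_mul, smul_eq_mul, smul_eq_mul,
    mul_sub, sub_eq_add_neg]
  ring

theorem posSemidef_circulant_of_dft_nonneg {q : ZMod N → ℂ} (hq : ∀ j, 0 ≤ 𝓕 q j) :
    (circulant q).PosSemidef := by
  rw [circulant_eq_sum_vecMulVec]
  refine posSemidef_sum _ fun j _ ↦ (posSemidef_vecMulVec_self_star _).smul ?_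
  exact mul_nonneg (by simp [inv_nonneg]) (hq j)

lemma conj_dft (Φ : ZMod N → ℂ) (k : ZMod N) :
    conj (𝓕 Φ k) = 𝓕 (conj ∘ Φ) (-k) := by
  simp only [dft_apply, map_sum, smul_eq_mul, map_mul, ← AddChar.map_neg_eq_conj,
    Function.comp_apply, neg_neg, mul_neg]

lemma conj_dft_ofReal_of_even {Φ : ZMod N → ℝ} (hΦ : Φ.Even) (k : ZMod N) :
    conj (𝓕 (fun j ↦ (Φ j : ℂ)) k) = 𝓕 (fun j ↦ (Φ j : ℂ)) k := by
  have hev : (fun j ↦ (Φ j : ℂ)).Even := fun j ↦ by simp [hΦ j]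
  rw [conj_dft]
  simpa [Function.comp_def] using dft_even_iff.mpr hev k

lemma dft_const_one (j : ZMod N) :
    𝓕 (fun _ ↦ (1 : ℂ)) j = if j = 0 then (N : ℂ) else 0 := by
  simp only [dft_apply, smul_eq_mul, mul_one, ← mul_neg,
    AddChar.sum_mulShift _ (isPrimitive_stdAddChar N), neg_eq_zero, ZMod.card,
    Nat.cast_ite, Nat.cast_zero]

lemma dft_ite_zero_one (j : ZMod N) : 𝓕 (fun k ↦ if k = 0 then (1 : ℂ) else 0) j = 1 := by
  simp [dft_apply]

lemma dft_sub_one_add_ite_zero (Φ : ZMod N → ℂ) (j : ZMod N) :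
    𝓕 (fun k ↦ if k = 0 then Φ 0 else Φ k - 1) j = 𝓕 Φ j + 1 - if j = 0 then (N : ℂ) else 0 := by
  have hΦ : (fun k ↦ if k = 0 then Φ 0 else Φ k - 1) =
      Φ - (fun _ ↦ 1) + fun k ↦ if k = 0 then 1 else 0 := by
    ext k; split_ifs with hk <;> simp [hk]
  rw [hΦ, map_add, map_sub, Pi.add_apply, Pi.sub_apply, dft_const_one, dft_ite_zero_one]
  ring

end ZMod

lemma Complex.eq_one_or_eq_neg_one_of_conj_eq {z : ℂ} (hz : conj z = z) (h : ‖z‖ = 1) :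
    z = 1 ∨ z = -1 := by
  obtain ⟨r, rfl⟩ := conj_eq_iff_real.mp hz
  rw [norm_real, Real.norm_eq_abs] at h
  rcases abs_eq zero_le_one |>.mp h with rfl | rfl <;> simp

theorem stmt_17_general (n : ℕ) [NeZero n] (α : ZMod n → ℝ) (c : ZMod n → ℂ)
    (hc : ∀ j : ZMod n,
      c j = ∑ k : ZMod n,
        Complex.exp (2 * Real.pi * Complex.I / n) ^ (-(j * k)).val * (α k : ℂ))
    (hsum : ∑ k : ZMod n, α k = n - 1)
    (habs : ∀ j : ZMod n, j ≠ 0 → ‖c j‖ = 1)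
    (hsym : ∀ k : ZMod n, α k = α (-k)) :
    (∀ j : ZMod n, j ≠ 0 → c j = 1 ∨ c j = -1) ∧
      (Matrix.circulant fun k : ZMod n =>
          if k = 0 then (α 0 : ℂ) else (α k : ℂ) - 1).PosSemidef ∧
      (∀ j : ZMod n,
        (Matrix.circulant fun k : ZMod n =>
            if k = 0 then (α 0 : ℂ) else (α k : ℂ) - 1).mulVec
          (fun l : ZMod n => Complex.exp (2 * Real.pi * Complex.I / n) ^ (j * l).val) =
        (if j = 0 then 0 else c j + 1) •
          fun l : ZMod n => Complex.exp (2 * Real.pi * Complex.I / n) ^ (j * l).val) ∧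
      (∀ j : ZMod n, j ≠ 0 → c j + 1 = 0 ∨ c j + 1 = 2) := by
  have hc_dft : c = 𝓕 (fun k ↦ (α k : ℂ)) := by
    ext j
    simp only [hc, dft_apply, exp_pow_val_eq_stdAddChar, smul_eq_mul, mul_comm j]
  have hc_pm (j : ZMod n) (hj : j ≠ 0) : c j = 1 ∨ c j = -1 :=
    eq_one_or_eq_neg_one_of_conj_eq
      (hc_dft ▸ conj_dft_ofReal_of_even (fun k ↦ (hsym k).symm) j) (habs j hj)
  have hspec (j : ZMod n) : 𝓕 (fun k ↦ if k = 0 then (α 0 : ℂ) else (α k : ℂ) - 1) j =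
      if j = 0 then 0 else c j + 1 := by
    rw [dft_sub_one_add_ite_zero (fun k ↦ (α k : ℂ)), hc_dft]
    split_ifs with hj
    · rw [hj, dft_apply_zero, ← ofReal_sum, hsum]
      push_cast
      ring
    · ring
  refine ⟨hc_pm, posSemidef_circulant_of_dft_nonneg fun j ↦ ?_, fun j ↦ ?_, fun j hj ↦ ?_⟩
  · rw [hspec]
    split_ifs with hj
    · rfl
    · rcases hc_pm j hj with h | h <;> rw [h] <;> norm_num
  · simp only [exp_pow_val_eq_stdAddChar, ← hspec]
    exact circulant_mulVec_stdAddChar _ j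
  · rcases hc_pm j hj with h | h <;> rw [h] <;> norm_num

theorem stmt_17 (n : ℕ) [NeZero n] (hn : 2 ≤ n) (α : ZMod n → ℝ) (c : ZMod n → ℂ)
    (hc : ∀ j : ZMod n,
      c j = ∑ k : ZMod n,
        Complex.exp (2 * Real.pi * Complex.I / n) ^ (-(j * k)).val * (α k : ℂ))
    (hpos : ∀ k : ZMod n, 0 ≤ α k)
    (hsum : ∑ k : ZMod n, α k = n - 1)
    (habs : ∀ j : ZMod n, j ≠ 0 → ‖c j‖ = 1)
    (hsym : ∀ k : ZMod n, α k = α (-k)) :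
    (∀ j : ZMod n, j ≠ 0 → c j = 1 ∨ c j = -1) ∧
      (Matrix.circulant fun k : ZMod n =>
          if k = 0 then (α 0 : ℂ) else (α k : ℂ) - 1).PosSemidef ∧
      (∀ j : ZMod n,
        (Matrix.circulant fun k : ZMod n =>
            if k = 0 then (α 0 : ℂ) else (α k : ℂ) - 1).mulVec
          (fun l : ZMod n => Complex.exp (2 * Real.pi * Complex.I / n) ^ (j * l).val) =
        (if j = 0 then 0 else c j + 1) •
          fun l : ZMod n => Complex.exp (2 * Real.pi * Complex.I / n) ^ (j * l).val) ∧
      (∀ j : ZMod n, j ≠ 0 → c j + 1 = 0 ∨ c j + 1 = 2) :=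
  stmt_17_general n α c hc hsum habs hsym
end
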